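/- arXiv:2103.15474 — 9 statements merged into one kernel-verified Lean document; each statement's English description precedes it below -/
import Mathlib

section
/- Let R be a commutative ring, A a finite locally free R-algebra whose dualizing module ω_{A/R} = Hom_R(A,R) is invertible, and φ : A → R an R-linear map such that the symmetric bilinear form B_φ(x,y) = φ(xy) is non-degenerate (i.e., induces an isomorphism A ≅ Hom_R(A,R)). Then for every ideal I ⊆ A, the orthogonal complement of I with respect to B_φ equals the annihilator of I: I^⊥ = Ann_A(I). -/
/-- For an oriented Gorenstein algebra `(A, φ)` over a commutative ring `R`
(i.e. `A` is a finite locally free `R`-algebra and the symmetric bilinear form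
`B_φ(x, y) = φ (x * y)` is non-degenerate, inducing an isomorphism `A ≃ Hom_R(A, R)`),
the orthogonal complement of any ideal `I ⊆ A` equals the annihilator of `I`. -/
theorem orthogonal_of_ideal_eq_annihilator
    (R A : Type*) [CommRing R] [CommRing A] [Algebra R A]
    [Module.Finite R A] [Module.Projective R A]
    (φ : A →ₗ[R] R)
    (hnd : Function.Bijective fun a : A => φ ∘ₗ LinearMap.mul R A a)
    (I : Ideal A) :
    ∀ a : A, (∀ i ∈ I, φ (a * i) = 0) ↔ (∀ i ∈ I, a * i = 0) := by
  intro a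
  constructor
  · intro h i hi
    have key : (fun a : A => φ ∘ₗ LinearMap.mul R A a) (a * i) =
        (fun a : A => φ ∘ₗ LinearMap.mul R A a) 0 := by
      ext x
      simp only [LinearMap.coe_comp, Function.comp_apply, LinearMap.mul_apply',
        map_zero, LinearMap.zero_apply, LinearMap.map_zero]
      have hx : x * i ∈ I := I.mul_mem_left x hi
      calc φ (a * i * x) = φ (a * (x * i)) := by ring_nf
        _ = 0 := h _ hx
    exact hnd.injective key
  · intro h i hi
    rw [h i hi, map_zero]
end

section
/- Let (A, φ) be an oriented Gorenstein R-algebra and e : A → R an R-algebra homomorphism (augmentation). Let e* : R → A be the adjoint map characterized by B_φ(e*(λ), y) = λ·e(y) for all y ∈ A. Then B_φ(e*(1), e*(1)) = 0 if and only if Ann_A(ker e) ⊆ ker e. -/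
/-- Let `(A, φ)` be an oriented Gorenstein `R`-algebra, `e : A → R` an
augmentation, and `x = e*(1)` the adjoint element characterized by `B_φ(x, y) = e y`
(so that `e*(λ) = λ • x`).  Then `B_φ(e*(1), e*(1)) = 0` iff `Ann_A(ker e) ⊆ ker e`. -/
theorem isotropic_iff_annihilator_subset_ker
    (R A : Type*) [CommRing R] [CommRing A] [Algebra R A]
    [Module.Finite R A] [Module.Projective R A]
    (φ : A →ₗ[R] R)
    (hnd : Function.Bijective fun a : A => φ ∘ₗ LinearMap.mul R A a)
    (e : A →ₐ[R] R) (x : A) (hx : ∀ y : A, φ (x * y) = e y) :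
    φ (x * x) = 0 ↔ ∀ a : A, (∀ i : A, e i = 0 → a * i = 0) → e a = 0 := by
  rw [hx x]
  constructor
  · intro hex a ha
    have := ha x hex
    have : φ (x * a) = 0 := by rw [mul_comm] at this; rw [this, map_zero]
    rwa [hx a] at this
  · intro h
    apply h x
    intro i hi
    have key : (fun a : A => φ ∘ₗ LinearMap.mul R A a) (x * i) =
        (fun a : A => φ ∘ₗ LinearMap.mul R A a) 0 := by
      ext y
      simp only [LinearMap.comp_apply, LinearMap.mul_apply', mul_assoc, hx,
        map_mul, hi, zero_mul, map_zero, LinearMap.zero_apply]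
    exact hnd.injective key
end

section
/- Let (A, φ, e) be an isotropically augmented oriented Gorenstein R-algebra with local socle generator x = e*(1). Then: (1) x spans the R-module Ann_A(ker e); (2) x² = 0; (3) φ(x) = 1. -/
/-- For an isotropically augmented oriented Gorenstein `R`-algebra
`(A, φ, e)` with local socle generator `x = e*(1)` (characterized by `B_φ(x, y) = e y`):
(1) `x` spans the `R`-module `Ann_A(ker e)`; (2) `x² = 0`; (3) `φ x = 1`. -/
theorem local_socle_generator_properties
    (R A : Type*) [CommRing R] [CommRing A] [Algebra R A]
    [Module.Finite R A] [Module.Projective R A]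
    (φ : A →ₗ[R] R)
    (hnd : Function.Bijective fun a : A => φ ∘ₗ LinearMap.mul R A a)
    (e : A →ₐ[R] R) (x : A) (hx : ∀ y : A, φ (x * y) = e y)
    (hiso : φ (x * x) = 0) :
    (∀ a : A, (∀ i : A, e i = 0 → a * i = 0) ↔ a ∈ Submodule.span R {x}) ∧
      x * x = 0 ∧ φ x = 1 := by
  have hinj : ∀ a : A, (∀ y : A, φ (a * y) = 0) → a = 0 := by
    intro a h
    have h0 : (fun a : A => φ ∘ₗ LinearMap.mul R A a) a
        = (fun a : A => φ ∘ₗ LinearMap.mul R A a) 0 := by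
      ext y
      simp [h y]
    exact hnd.injective h0
  have hex : e x = 0 := by rw [← hx x]; exact hiso
  have hx2 : x * x = 0 := by
    apply hinj
    intro y
    rw [mul_assoc, hx, map_mul, hex, zero_mul]
  have hφx : φ x = 1 := by simpa using hx 1
  refine ⟨fun a => ⟨fun h => ?_, fun h i hi => ?_⟩, hx2, hφx⟩
  · -- a annihilates ker e → a = φ a • x
    have key : a = φ a • x := by
      have hsub : ∀ y : A, a * y = e y • a := by
        intro y
        have hk : e (y - e y • (1 : A)) = 0 := by simp
        have := h _ hk
        have h2 : a * y - a * (e y • 1) = 0 := by rw [← mul_sub]; exact this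
        have h3 : a * (e y • (1 : A)) = e y • a := by
          rw [mul_smul_comm, mul_one]
        linear_combination (norm := module) h2 + h3
      have hz : a - φ a • x = 0 := by
        apply hinj
        intro y
        have h1 : φ ((a - φ a • x) * y) = φ (a * y) - φ a * φ (x * y) := by
          rw [sub_mul, map_sub, smul_mul_assoc, map_smul, smul_eq_mul]
        rw [h1, hx, hsub y, map_smul, smul_eq_mul, mul_comm, sub_self]
      exact sub_eq_zero.mp hz
    rw [key]
    exact Submodule.smul_mem _ _ (Submodule.mem_span_singleton_self x)
  · -- a ∈ span {x} → a annihilates ker e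
    obtain ⟨r, rfl⟩ := Submodule.mem_span_singleton.mp h
    have hxi : x * i = 0 := by
      apply hinj
      intro y
      rw [mul_assoc, hx, map_mul, hi, zero_mul]
    rw [smul_mul_assoc, hxi, smul_zero]
end

section
/- Let R be a commutative ring, V an R-module, and B : V × V → R a symmetric bilinear form satisfying B(uv, w) = B(u, vw) for some (possibly non-unital) commutative associative multiplication on V. Define on A := R² ⊕ V (with R² spanned by elements 1 and x) the multiplication (r + sx, v)·(r' + s'x, v') = (rr' + (sr' + s'r + B(v,v'))x, r'v + rv' + vv'). Then this multiplication is commutative, associative, and unital with unit (1, 0). -/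
/-- The unitalization multiplication on `A = R·1 ⊕ R·x ⊕ V` twisted by a bilinear form `B`:
`(r + s·x, v)·(r' + s'·x, v') = (r r' + (s r' + s' r + B(v,v'))·x, r'·v + r·v' + v v')`. -/
def unitalizationMul {R V : Type*} [CommRing R] [NonUnitalCommRing V] [Module R V]
    (B : V →ₗ[R] V →ₗ[R] R) (p q : (R × R) × V) : (R × R) × V :=
  ((p.1.1 * q.1.1, p.1.1 * q.1.2 + p.1.2 * q.1.1 + B p.2 q.2),
    q.1.1 • p.2 + p.1.1 • q.2 + p.2 * q.2)

/-- Let `V` be a (possibly non-unital) commutative associative `R`-algebra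
and `B` a symmetric bilinear form on `V` with `B(uv, w) = B(u, vw)`.  Then the
unitalization multiplication on `A = R² ⊕ V` is commutative, associative, and unital
with unit `(1, 0)`. -/
theorem unitalizationMul_comm_assoc_one
    (R V : Type*) [CommRing R] [NonUnitalCommRing V] [Module R V]
    [IsScalarTower R V V] [SMulCommClass R V V]
    (B : V →ₗ[R] V →ₗ[R] R)
    (hsymm : ∀ u v : V, B u v = B v u)
    (hassoc : ∀ u v w : V, B (u * v) w = B u (v * w)) :
    (∀ p q : (R × R) × V, unitalizationMul B p q = unitalizationMul B q p) ∧
    (∀ p q r : (R × R) × V,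
      unitalizationMul B (unitalizationMul B p q) r
        = unitalizationMul B p (unitalizationMul B q r)) ∧
    (∀ p : (R × R) × V, unitalizationMul B ((1, 0), 0) p = p) := by
  refine ⟨fun p q => ?_, fun p q r => ?_, fun p => ?_⟩
  · simp only [unitalizationMul, Prod.mk.injEq]
    refine ⟨⟨by ring, by rw [hsymm]; ring⟩, by rw [mul_comm]; abel⟩
  · simp only [unitalizationMul, Prod.mk.injEq, map_add, map_smul, LinearMap.add_apply,
      LinearMap.smul_apply, smul_eq_mul, smul_add, smul_smul, mul_smul_comm, smul_mul_assoc,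
      add_mul, mul_add]
    refine ⟨⟨by ring, ?_⟩, ?_⟩
    · rw [hassoc p.2 q.2 r.2]; ring
    · rw [mul_assoc, mul_comm r.1.1 q.1.1, mul_comm r.1.1 p.1.1]; abel
  · simp [unitalizationMul]
end

section
/- Let R be a commutative ring, (V,·) a commutative associative non-unital R-algebra that is finite locally free as an R-module, and B a non-degenerate symmetric bilinear form on V with B(uv,w) = B(u,vw). Let λ ∈ R. On A = R·1 ⊕ R·x ⊕ V define multiplication (r + sx, v)(r' + s'x, v') = (rr' + (sr' + s'r + B(v,v'))x, r'v + rv' + vv') and φ(r + sx, v) = rλ + s. Then B_φ(a,b) := φ(ab) is a non-degenerate symmetric bilinear form on A; in fact, with respect to the decomposition A = (R·1 ⊕ R·x) ⊕ V, B_φ is the orthogonal sum of the form with matrix [[λ, 1],[1, 0]] on R·1 ⊕ R·x and the form B on V. -/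
/-- The orthogonal sum of the form with Gram matrix `[[λ, 1], [1, 0]]` on `R·1 ⊕ R·x`
and the form `B` on `V`, as a bilinear form on `A = R² ⊕ V`. -/
noncomputable def orthSumForm {R V : Type*} [CommRing R] [NonUnitalCommRing V] [Module R V]
    (B : V →ₗ[R] V →ₗ[R] R) (lam : R) :
    ((R × R) × V) →ₗ[R] ((R × R) × V) →ₗ[R] R :=
  LinearMap.mk₂ R
    (fun p q => p.1.1 * q.1.1 * lam + p.1.1 * q.1.2 + p.1.2 * q.1.1 + B p.2 q.2)
    (by intros m₁ m₂ n
        simp only [Prod.fst_add, Prod.snd_add, map_add, LinearMap.add_apply]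
        ring)
    (by intros c m n
        simp only [Prod.smul_fst, Prod.smul_snd, map_smul, LinearMap.smul_apply,
          smul_eq_mul]
        ring)
    (by intros m n₁ n₂
        simp only [Prod.fst_add, Prod.snd_add, map_add, LinearMap.add_apply]
        ring)
    (by intros c m n
        simp only [Prod.smul_fst, Prod.smul_snd, map_smul, LinearMap.smul_apply,
          smul_eq_mul]
        ring)

/-!
`B_φ` is computed directly to be the orthogonal sum, and an orthogonal sum of two
perfect pairings is perfect because `Dual (M₁ × M₂) ≃ Dual M₁ × Dual M₂`. The Gram matrix
`[[λ, 1], [1, 0]]` has determinant `-1`, so the plane part is perfect over any ring.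
-/

open Module

theorem LinearMap.bijective_coprod_of_bijective {R M₁ M₂ N₁ N₂ : Type*} [CommRing R]
    [AddCommGroup M₁] [Module R M₁] [AddCommGroup M₂] [Module R M₂]
    [AddCommGroup N₁] [Module R N₁] [AddCommGroup N₂] [Module R N₂]
    {B₁ : M₁ →ₗ[R] Dual R N₁} {B₂ : M₂ →ₗ[R] Dual R N₂}
    (h₁ : Function.Bijective B₁) (h₂ : Function.Bijective B₂) :
    Function.Bijective fun p : M₁ × M₂ => (B₁ p.1).coprod (B₂ p.2) :=
  (dualProdDualEquivDual R N₁ N₂).bijective.comp (h₁.prodMap h₂)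

section

variable {R V : Type*} [CommRing R] [NonUnitalCommRing V] [Module R V]

def planeForm (lam : R) : (R × R) →ₗ[R] (R × R) →ₗ[R] R :=
  LinearMap.mk₂ R (fun a c => a.1 * c.1 * lam + a.1 * c.2 + a.2 * c.1)
    (fun _ _ _ => by simp only [Prod.fst_add, Prod.snd_add]; ring)
    (fun _ _ _ => by simp only [Prod.smul_fst, Prod.smul_snd, smul_eq_mul]; ring)
    (fun _ _ _ => by simp only [Prod.fst_add, Prod.snd_add]; ring)
    (fun _ _ _ => by simp only [Prod.smul_fst, Prod.smul_snd, smul_eq_mul]; ring)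

@[simp]
theorem planeForm_apply (lam : R) (a c : R × R) :
    planeForm lam a c = a.1 * c.1 * lam + a.1 * c.2 + a.2 * c.1 :=
  rfl

theorem planeForm_bijective (lam : R) : Function.Bijective (planeForm lam) := by
  refine Function.bijective_iff_has_inverse.2
    ⟨fun f => (f (0, 1), f (1, 0) - f (0, 1) * lam), fun a => ?_, fun f => ?_⟩
  · ext <;> simp
  · refine LinearMap.prod_ext (LinearMap.ext_ring ?_) (LinearMap.ext_ring ?_) <;> simp

theorem orthSumForm_apply (B : V →ₗ[R] V →ₗ[R] R) (lam : R) (p q : (R × R) × V) :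
    orthSumForm B lam p q = planeForm lam p.1 q.1 + B p.2 q.2 :=
  rfl

theorem orthSumForm_eq_coprod (B : V →ₗ[R] V →ₗ[R] R) (lam : R) (p : (R × R) × V) :
    orthSumForm B lam p = (planeForm lam p.1).coprod (B p.2) :=
  LinearMap.ext fun _ => orthSumForm_apply B lam p _

theorem unitalizationMul_comm {B : V →ₗ[R] V →ₗ[R] R} (hsymm : ∀ u v : V, B u v = B v u)
    (p q : (R × R) × V) : unitalizationMul B p q = unitalizationMul B q p := by
  simp only [unitalizationMul, hsymm p.2 q.2, mul_comm p.2 q.2]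
  ext
  · exact mul_comm _ _
  · ring
  · exact congrArg (· + q.2 * p.2) (add_comm _ _)

end

theorem unitalization_orientation_nondegenerate_general
    (R V : Type*) [CommRing R] [NonUnitalCommRing V] [Module R V]
    (B : V →ₗ[R] V →ₗ[R] R)
    (hsymm : ∀ u v : V, B u v = B v u)
    (hBnd : Function.Bijective fun v : V => B v)
    (lam : R) (φ : (R × R) × V → R) (hφ : ∀ p, φ p = p.1.1 * lam + p.1.2) :
    (∀ p q : (R × R) × V, φ (unitalizationMul B p q) = φ (unitalizationMul B q p)) ∧
    (∀ p q : (R × R) × V, φ (unitalizationMul B p q) = orthSumForm B lam p q) ∧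
    Function.Bijective fun p : (R × R) × V => orthSumForm B lam p := by
  refine ⟨fun p q => by rw [unitalizationMul_comm hsymm], fun p q => ?_, ?_⟩
  · rw [hφ, orthSumForm_apply, planeForm_apply]
    simp only [unitalizationMul]
    ring
  · simp only [orthSumForm_eq_coprod]
    exact LinearMap.bijective_coprod_of_bijective (planeForm_bijective lam) hBnd

/-- Let `(V, ·)` be a commutative associative non-unital `R`-algebra, finite
locally free as an `R`-module, `B` a non-degenerate symmetric bilinear form on `V` with
`B(uv, w) = B(u, vw)`, and `λ ∈ R`.  On `A = R·1 ⊕ R·x ⊕ V` with the unitalization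
multiplication and `φ(r + s·x, v) = r λ + s`, the form `B_φ(a, b) = φ (a b)` is a
non-degenerate symmetric bilinear form; in fact it is the orthogonal sum of the form
`[[λ, 1], [1, 0]]` on `R·1 ⊕ R·x` and the form `B` on `V`. -/
theorem unitalization_orientation_nondegenerate
    (R V : Type*) [CommRing R] [NonUnitalCommRing V] [Module R V]
    [IsScalarTower R V V] [SMulCommClass R V V]
    [Module.Finite R V] [Module.Projective R V]
    (B : V →ₗ[R] V →ₗ[R] R)
    (hsymm : ∀ u v : V, B u v = B v u)
    (hassoc : ∀ u v w : V, B (u * v) w = B u (v * w))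
    (hBnd : Function.Bijective fun v : V => B v)
    (lam : R) (φ : (R × R) × V → R) (hφ : ∀ p, φ p = p.1.1 * lam + p.1.2) :
    (∀ p q : (R × R) × V, φ (unitalizationMul B p q) = φ (unitalizationMul B q p)) ∧
    (∀ p q : (R × R) × V, φ (unitalizationMul B p q) = orthSumForm B lam p q) ∧
    Function.Bijective fun p : (R × R) × V => orthSumForm B lam p :=
  unitalization_orientation_nondegenerate_general R V B hsymm hBnd lam φ hφ
end

section
/- Consider the Z[t]-algebra ℛ = Z[x,t]/((x−t)²x²), which is free of rank 4 over Z[t] with basis 1, x, x², x³, and the orientation φ(r₀ + r₁x + r₂x² + r₃x³) = r₃ (r_i ∈ Z[t]). Let e^const, e^mv : ℛ → Z[t] be the algebra homomorphisms sending x to 0 and to t respectively. Then the B_φ-adjoint elements are (e^const)*(1) = t²x − 2tx² + x³ and (e^mv)*(1) = −tx² + x³, and both augmentations are isotropic: B_φ((e^const)*(1), (e^const)*(1)) = 0 and B_φ((e^mv)*(1), (e^mv)*(1)) = 0. -/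
open Polynomial

private lemma key_lemma (f a : Polynomial (Polynomial ℤ)) (c : Polynomial ℤ)
    (hfm : f.Monic) (hdf : f.degree = 4)
    (hda : a.degree ≤ 3) (hdvd : f ∣ a * (X - C c)) :
    ∀ y : Polynomial (Polynomial ℤ), ((a * y) %ₘ f).coeff 3 = y.eval c * a.coeff 3 := by
  intro y
  obtain ⟨h, hh⟩ : (X - C c) ∣ (y - C (y.eval c)) := dvd_iff_isRoot.mpr (by simp)
  have h2 : f ∣ (a * y - C (y.eval c) * a) := by
    have heq : a * y - C (y.eval c) * a = (a * (X - C c)) * h := by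
      have : a * (y - C (y.eval c)) = a * ((X - C c) * h) := by rw [← hh]
      linear_combination this
    rw [heq]
    exact hdvd.mul_right h
  have h3 : (a * y) %ₘ f = (C (y.eval c) * a) %ₘ f := by
    have hz : (a * y - C (y.eval c) * a) %ₘ f = 0 :=
      (modByMonic_eq_zero_iff_dvd hfm).2 h2
    rw [sub_modByMonic] at hz
    exact sub_eq_zero.mp hz
  have h4 : (C (y.eval c) * a) %ₘ f = C (y.eval c) * a := by
    rw [modByMonic_eq_self_iff hfm, hdf]
    calc (C (y.eval c) * a).degree ≤ (C (y.eval c)).degree + a.degree := degree_mul_le _ _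
    _ ≤ 0 + 3 := add_le_add degree_C_le hda
    _ < 4 := by decide
  rw [h3, h4, coeff_C_mul]

/-- In the `ℤ[t]`-algebra `ℛ = ℤ[x,t]/((x−t)²x²)` (modeled as `ℤ[t][x]`
modulo the monic polynomial `f = (x − t)²x²`, with the orientation `φ` extracting the
coefficient of `x³` of the reduction mod `f`), the augmentations `e^const : x ↦ 0` and
`e^mv : x ↦ t` have `B_φ`-adjoint elements `(e^const)*(1) = t²x − 2tx² + x³` and
`(e^mv)*(1) = −tx² + x³` (i.e. `φ(a · y) = e(y)` for all `y`), and both augmentations are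
isotropic: `B_φ(e*(1), e*(1)) = φ(e*(1)²) = 0`. -/
theorem colliding_double_points_adjoints_isotropic :
    ∀ (t : Polynomial ℤ), t = X →
    ∀ (f aConst aMv : Polynomial (Polynomial ℤ)),
    f = (X - C t) ^ 2 * X ^ 2 →
    aConst = C (t ^ 2) * X - C (2 * t) * X ^ 2 + X ^ 3 →
    aMv = - C t * X ^ 2 + X ^ 3 →
    (∀ y : Polynomial (Polynomial ℤ), ((aConst * y) %ₘ f).coeff 3 = y.eval 0) ∧
    (∀ y : Polynomial (Polynomial ℤ), ((aMv * y) %ₘ f).coeff 3 = y.eval t) ∧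
    ((aConst * aConst) %ₘ f).coeff 3 = 0 ∧
    ((aMv * aMv) %ₘ f).coeff 3 = 0 := by
  intro t ht f aConst aMv hf ha hm
  have hfm : f.Monic := by
    rw [hf]; exact (((monic_X_sub_C t).pow 2).mul (monic_X_pow 2))
  have hdf : f.degree = 4 := by
    rw [hf]
    compute_degree!
  have hdac : aConst.degree ≤ 3 := by rw [ha]; compute_degree
  have hdam : aMv.degree ≤ 3 := by rw [hm]; compute_degree
  have hcac : aConst.coeff 3 = 1 := by
    rw [ha]; simp only [coeff_add, coeff_sub, coeff_C_mul, coeff_X_pow, coeff_X]; norm_num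
  have hcam : aMv.coeff 3 = 1 := by
    rw [hm, ← map_neg C t]; simp only [coeff_add, coeff_C_mul, coeff_X_pow]; norm_num
  have hdvdc : f ∣ aConst * (X - C 0) := by
    refine ⟨1, ?_⟩
    rw [hf, ha]; simp only [C_0, C_mul, C_pow, map_ofNat]; ring
  have hdvdm : f ∣ aMv * (X - C t) := by
    refine ⟨1, ?_⟩
    rw [hf, hm]; ring
  have kc := key_lemma f aConst 0 hfm hdf hdac hdvdc
  have km := key_lemma f aMv t hfm hdf hdam hdvdm
  refine ⟨fun y => by rw [kc y, hcac, mul_one], fun y => by rw [km y, hcam, mul_one], ?_, ?_⟩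
  · rw [kc aConst, hcac, mul_one, ha]; simp
  · rw [km aMv, hcam, mul_one, hm]; simp; ring
end

section
/- Let k be a field, A a finite-dimensional commutative k-algebra with orientation φ, and e : A → k an augmentation with maximal ideal m = ker e. Then e is isotropic (i.e., φ(e*(1)²) = 0, where e* is the B_φ-adjoint of e) if and only if the localization A_m is not isomorphic to k. -/
/-!
Non-degeneracy of `φ` makes `x` annihilate `m = ker e`, and `φ (x * x) = e x`. If `e x ≠ 0`,
then `x` is a unit of `A_m` killing `m`, so the maximal ideal of `A_m` vanishes and `A_m` is its
residue field `k`. If `e x = 0` and `A_m` is a field, then `x ∈ m` dies in `A_m`, i.e. `s * x = 0`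
for some `s ∉ m`, whence `e s = φ (x * s) = 0`, a contradiction.
-/

theorem Localization.AtPrime.isField_iff {R : Type*} [CommRing R] (p : Ideal R) [p.IsPrime] :
    IsField (Localization.AtPrime p) ↔ ∀ y ∈ p, ∃ s ∉ p, s * y = 0 := by
  rw [IsLocalRing.isField_iff_maximalIdeal_eq, ← Localization.AtPrime.map_eq_maximalIdeal,
    Ideal.map_eq_bot_iff_le_ker]
  refine forall₂_congr fun y _ => ?_
  rw [RingHom.mem_ker, IsLocalization.map_eq_zero_iff p.primeCompl]
  exact ⟨fun ⟨s, hs⟩ => ⟨s, s.2, hs⟩, fun ⟨s, hs, hsy⟩ => ⟨⟨s, hs⟩, hsy⟩⟩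

theorem AlgHom.nonempty_algEquiv_localization_ker_iff_isField {k A : Type*} [Field k]
    [CommRing A] [Algebra k A] (e : A →ₐ[k] k) [(RingHom.ker (e : A →+* k)).IsPrime] :
    Nonempty (Localization.AtPrime (RingHom.ker (e : A →+* k)) ≃ₐ[k] k) ↔
      IsField (Localization.AtPrime (RingHom.ker (e : A →+* k))) := by
  refine ⟨fun ⟨f⟩ => f.toMulEquiv.isField (Field.toIsField k), fun hL => ?_⟩
  let := hL.toField
  let g : Localization.AtPrime (RingHom.ker (e : A →+* k)) →ₐ[k] k :=
    IsLocalization.liftAlgHom (M := (RingHom.ker (e : A →+* k)).primeCompl) (f := e)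
      fun s => isUnit_iff_ne_zero.mpr s.2
  exact ⟨AlgEquiv.ofBijective g
    ⟨g.toRingHom.injective, fun c => ⟨algebraMap k _ c, g.commutes c⟩⟩⟩

theorem mul_eq_zero_of_apply_eq_zero {k A : Type*} [Field k] [CommRing A] [Algebra k A]
    {φ : A →ₗ[k] k} (hφ : Function.Injective fun a : A => φ ∘ₗ LinearMap.mul k A a)
    {e : A →ₐ[k] k} {x : A} (hx : ∀ y : A, φ (x * y) = e y) {y : A} (hy : e y = 0) :
    x * y = 0 := by
  refine hφ (LinearMap.ext fun z => ?_)
  calc φ (x * y * z) = e y * e z := by rw [mul_assoc, hx, map_mul]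
    _ = φ (0 * z) := by rw [hy, zero_mul, zero_mul, map_zero]

theorem isotropic_iff_localization_not_trivial_general
    (k A : Type*) [Field k] [CommRing A] [Algebra k A]
    (φ : A →ₗ[k] k)
    (hnd : Function.Bijective fun a : A => φ ∘ₗ LinearMap.mul k A a)
    (e : A →ₐ[k] k) (x : A) (hx : ∀ y : A, φ (x * y) = e y)
    [hm : (RingHom.ker (e : A →+* k)).IsPrime] :
    φ (x * x) = 0 ↔
      ¬ Nonempty ((Localization.AtPrime (RingHom.ker (e : A →+* k))) ≃ₐ[k] k) := by
  rw [e.nonempty_algEquiv_localization_ker_iff_isField, Localization.AtPrime.isField_iff, hx x]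
  constructor
  · rintro hex hfield
    obtain ⟨s, hs, hsx⟩ := hfield x hex
    exact hs (by rw [RingHom.mem_ker, AlgHom.coe_toRingHom, ← hx, mul_comm, hsx, map_zero])
  · intro hne
    by_contra hex
    exact hne fun y hy => ⟨x, hex, mul_eq_zero_of_apply_eq_zero hnd.injective hx hy⟩

/-- Let `k` be a field, `A` a finite-dimensional commutative `k`-algebra
with orientation `φ` (so `B_φ(a, b) = φ (a b)` is non-degenerate), `e : A → k` an
augmentation with maximal ideal `m = ker e`, and `x = e*(1)` the `B_φ`-adjoint element
(`φ (x * y) = e y` for all `y`).  Then `e` is isotropic, i.e. `φ (x * x) = 0`, if and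
only if the localization `A_m` is not isomorphic to `k` (as a `k`-algebra). -/
theorem isotropic_iff_localization_not_trivial
    (k A : Type*) [Field k] [CommRing A] [Algebra k A] [FiniteDimensional k A]
    (φ : A →ₗ[k] k)
    (hnd : Function.Bijective fun a : A => φ ∘ₗ LinearMap.mul k A a)
    (e : A →ₐ[k] k) (x : A) (hx : ∀ y : A, φ (x * y) = e y)
    [hm : (RingHom.ker (e : A →+* k)).IsPrime] :
    φ (x * x) = 0 ↔
      ¬ Nonempty ((Localization.AtPrime (RingHom.ker (e : A →+* k))) ≃ₐ[k] k) :=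
  isotropic_iff_localization_not_trivial_general k A φ hnd e x hx (hm := hm)
end

section
/- Let R be a commutative ring, V a finite projective R-module, and B a symmetric bilinear form on V such that B(x,x) ∈ 2R for all x ∈ V (B is even). Suppose there exists a bilinear form B' on V with B(x,y) = B'(x,y) + B'(y,x). Then there exist n ≥ 0 and an R-linear map F : V → R^n ⊕ R^n such that B(x,y) = H(Fx, Fy) for all x, y ∈ V, where H is the hyperbolic form H((a,b),(a',b')) = ⟨a,b'⟩ + ⟨a',b⟩ on R^n ⊕ R^n; moreover if B is non-degenerate then F is injective (an isometric embedding). -/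
/-!
Realise `V` as a direct summand of `Rⁿ`: a surjection `π : Rⁿ → V` with a section `s`.
Put `F x = ((B' x (π eᵢ))ᵢ, s x)`. Since `π ∘ s = id`, the hyperbolic pairing of `F x` and
`F y` is `B' x (π (s y)) + B' y (π (s x)) = B' x y + B' y x = B x y`, and `F` is injective
because its second component `s` is.
-/

namespace LinearMap

variable {R V ι : Type*} [CommRing R] [AddCommGroup V] [Module R V] [DecidableEq ι]

def toHyperbolic (B' : V →ₗ[R] V →ₗ[R] R) (π : (ι → R) →ₗ[R] V) (s : V →ₗ[R] ι → R) :
    V →ₗ[R] (ι → R) × (ι → R) :=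
  (LinearMap.pi fun i => B'.flip (π (Pi.single i 1))).prod s

theorem toHyperbolic_apply (B' : V →ₗ[R] V →ₗ[R] R) (π : (ι → R) →ₗ[R] V) (s : V →ₗ[R] ι → R)
    (x : V) : toHyperbolic B' π s x = (fun i => B' x (π (Pi.single i 1)), s x) :=
  rfl

theorem sum_apply_single_mul_of_comp_eq_id [Fintype ι] (B' : V →ₗ[R] V →ₗ[R] R)
    {π : (ι → R) →ₗ[R] V} {s : V →ₗ[R] ι → R} (hπs : π ∘ₗ s = .id) (x y : V) :
    ∑ i, B' x (π (Pi.single i 1)) * s y i = B' x y := by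
  calc ∑ i, B' x (π (Pi.single i 1)) * s y i
      = (B' x ∘ₗ π) (∑ i, s y i • Pi.single i 1) := by
        simp only [map_sum, map_smul, coe_comp, Function.comp_apply, smul_eq_mul, mul_comm]
    _ = B' x (π (s y)) := by rw [← pi_eq_sum_univ']; rfl
    _ = B' x y := by rw [← comp_apply π s, hπs, id_apply]

theorem hyperbolic_toHyperbolic [Fintype ι] (B' : V →ₗ[R] V →ₗ[R] R)
    {π : (ι → R) →ₗ[R] V} {s : V →ₗ[R] ι → R} (hπs : π ∘ₗ s = .id) (x y : V) :
    ∑ i, ((toHyperbolic B' π s x).1 i * (toHyperbolic B' π s y).2 i +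
      (toHyperbolic B' π s y).1 i * (toHyperbolic B' π s x).2 i) = B' x y + B' y x := by
  simp only [toHyperbolic_apply, Finset.sum_add_distrib, sum_apply_single_mul_of_comp_eq_id B' hπs]

theorem toHyperbolic_injective (B' : V →ₗ[R] V →ₗ[R] R)
    {π : (ι → R) →ₗ[R] V} {s : V →ₗ[R] ι → R} (hπs : π ∘ₗ s = .id) :
    Function.Injective (toHyperbolic B' π s) := fun _ _ hxy =>
  injective_of_comp_eq_id s π hπs (congrArg Prod.snd hxy)

end LinearMap

theorem even_form_embeds_in_hyperbolic_general
    (R V : Type*) [CommRing R] [AddCommGroup V] [Module R V]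
    [Module.Finite R V] [Module.Projective R V]
    (B B' : V →ₗ[R] V →ₗ[R] R)
    (hB' : ∀ x y : V, B x y = B' x y + B' y x) :
    ∃ (n : ℕ) (F : V →ₗ[R] (Fin n → R) × (Fin n → R)),
      (∀ x y : V, B x y = ∑ i, ((F x).1 i * (F y).2 i + (F y).1 i * (F x).2 i)) ∧
      (Function.Bijective (fun x : V => B x) → Function.Injective F) := by
  obtain ⟨n, π, s, -, -, hπs⟩ := Module.Finite.exists_comp_eq_id_of_projective R V
  refine ⟨n, LinearMap.toHyperbolic B' π s, fun x y => ?_,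
    fun _ => LinearMap.toHyperbolic_injective B' hπs⟩
  rw [hB', LinearMap.hyperbolic_toHyperbolic B' hπs]

/-- Let `V` be a finite projective `R`-module and `B` a symmetric even
bilinear form on `V` (with `B' ` witnessing evenness: `B x y = B' x y + B' y x`).  Then
there exist `n ≥ 0` and an `R`-linear map `F : V → Rⁿ ⊕ Rⁿ` such that `B` is the
pullback along `F` of the hyperbolic form `H((a,b),(a',b')) = Σᵢ (aᵢ b'ᵢ + a'ᵢ bᵢ)`;
moreover, if `B` is non-degenerate then `F` is injective (an isometric embedding). -/
theorem even_form_embeds_in_hyperbolic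
    (R V : Type*) [CommRing R] [AddCommGroup V] [Module R V]
    [Module.Finite R V] [Module.Projective R V]
    (B B' : V →ₗ[R] V →ₗ[R] R)
    (hsymm : ∀ x y : V, B x y = B y x)
    (heven : ∀ x : V, ∃ r : R, B x x = 2 * r)
    (hB' : ∀ x y : V, B x y = B' x y + B' y x) :
    ∃ (n : ℕ) (F : V →ₗ[R] (Fin n → R) × (Fin n → R)),
      (∀ x y : V, B x y = ∑ i, ((F x).1 i * (F y).2 i + (F y).1 i * (F x).2 i)) ∧
      (Function.Bijective (fun x : V => B x) → Function.Injective F) :=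
  even_form_embeds_in_hyperbolic_general R V B B' hB'
end

section
/- Let q ≥ 1 and k a field. Consider the k-algebra A_q = k[y₁,…,y_q]/((yᵢyⱼ : i ≠ j) + (yᵢ² − yⱼ² : i ≠ j) + (y₁³)). Then A_q is a free k-module of rank q+2 with basis 1, y₁, …, y_q, y₁², and the linear functional φ₀ dual to y₁² in this basis (φ₀(y₁²) = 1, φ₀(1) = φ₀(yᵢ) = 0) satisfies: B_{φ₀}(a,b) = φ₀(ab) is a non-degenerate symmetric bilinear form on A_q. -/
/-!
The functional `p ↦ ∑ᵢ coeff (yᵢ²) p` on `k[y₁,…,y_q]` (Macaulay's inverse system generator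
`∑ᵢ Yᵢ^[2]`) kills every multiple of every generator of the ideal, so it descends to a functional
`φ₀` on `A_q`. Under `(a, b) ↦ φ₀ (a b)` the family `1, y₁, …, y_q, y₁²` pairs with
`y₁², y₁, …, y_q, 1` to the identity matrix. The relations show that the first family spans
`A_q`, so this pairing makes it a basis, identifies `φ₀` with the last coordinate and shows
that the form is non-degenerate.
-/

open MvPolynomial

theorem LinearIndependent.of_pairing_eq_ite {R M N ι : Type*} [CommSemiring R]
    [AddCommMonoid M] [Module R M] [AddCommMonoid N] [Module R N] [DecidableEq ι]
    (B : M →ₗ[R] N →ₗ[R] R) {v : ι → M} {w : ι → N}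
    (h : ∀ i j, B (v i) (w j) = if i = j then 1 else 0) :
    LinearIndependent R v := by
  refine LinearIndependent.of_comp (LinearMap.pi fun j => B.flip (w j)) ?_
  have hpair : (LinearMap.pi fun j => B.flip (w j)) ∘ v = fun i => Pi.single i 1 := by
    ext i j
    simp [h, Pi.single_apply, eq_comm]
  rw [hpair]
  exact Pi.linearIndependent_single_one ι R

theorem Module.Basis.bijective_of_pairing_eq_ite {K M ι : Type*} [Field K] [AddCommGroup M]
    [Module K M] [Fintype ι] [DecidableEq ι] (b : Module.Basis ι K M) {w : ι → M}
    (B : M →ₗ[K] M →ₗ[K] K) (h : ∀ i j, B (b i) (w j) = if i = j then 1 else 0) :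
    Function.Bijective B := by
  have hcoord (j : ι) : B.flip (w j) = b.coord j :=
    b.ext fun i => by simp [h, Finsupp.single_apply]
  have hinj : Function.Injective B := by
    refine (injective_iff_map_eq_zero B).mpr fun x hx =>
      b.forall_coord_eq_zero_iff.mp fun j => ?_
    rw [← hcoord, LinearMap.flip_apply, hx, LinearMap.zero_apply]
  have : FiniteDimensional K M := b.finiteDimensional_of_finite
  exact ⟨hinj, (LinearMap.injective_iff_surjective_of_finrank_eq_finrank
    Subspace.dual_finrank_eq.symm).mp hinj⟩

noncomputable section

section Polynomial

variable {R σ : Type*} [CommRing R]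

def fatPointIdeal (R : Type*) [CommRing R] {σ : Type*} (z : σ) : Ideal (MvPolynomial σ R) :=
  Ideal.span ({p | ∃ i j : σ, i ≠ j ∧ p = X i * X j} ∪
    {p | ∃ i j : σ, i ≠ j ∧ p = X i ^ 2 - X j ^ 2} ∪ {X z ^ 3})

theorem coeff_single_two_mul_X_mul_X {i j : σ} (hij : i ≠ j) (l : σ) (r : MvPolynomial σ R) :
    coeff (Finsupp.single l 2) (r * (X i * X j)) = 0 := by
  classical
  rw [X, X, monomial_mul, coeff_mul_monomial', if_neg]
  intro hle
  have hi := hle i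
  have hj := hle j
  simp only [Finsupp.coe_add, Pi.add_apply, Finsupp.single_apply] at hi hj
  split_ifs at hi hj <;> simp_all

theorem coeff_single_two_mul_X_pow_three (l z : σ) (r : MvPolynomial σ R) :
    coeff (Finsupp.single l 2) (r * X z ^ 3) = 0 := by
  classical
  rw [X_pow_eq_monomial, coeff_mul_monomial', if_neg]
  rw [Finsupp.single_le_iff, Finsupp.single_apply]
  split_ifs <;> omega

variable (z : σ)

local notation "π" => Ideal.Quotient.mk (fatPointIdeal R z)

theorem mk_X_mul_mk_X_of_ne {i j : σ} (hij : i ≠ j) : π (X i) * π (X j) = 0 := by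
  rw [← map_mul, Ideal.Quotient.eq_zero_iff_mem]
  exact Ideal.subset_span (.inl (.inl ⟨i, j, hij, rfl⟩))

theorem mk_X_sq (i : σ) : π (X i) ^ 2 = π (X z) ^ 2 := by
  obtain rfl | hiz := eq_or_ne i z
  · rfl
  rw [← sub_eq_zero, ← map_pow, ← map_pow, ← map_sub, Ideal.Quotient.eq_zero_iff_mem]
  exact Ideal.subset_span (.inl (.inr ⟨i, z, hiz, rfl⟩))

theorem mk_X_mul_mk_X [DecidableEq σ] (i j : σ) :
    π (X i) * π (X j) = if i = j then π (X z) ^ 2 else 0 := by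
  split_ifs with hij
  · rw [hij, ← sq, mk_X_sq]
  · exact mk_X_mul_mk_X_of_ne z hij

theorem mk_X_sq_mul_mk_X (i j : σ) : π (X i) ^ 2 * π (X j) = 0 := by
  rw [mk_X_sq]
  obtain rfl | hjz := eq_or_ne j z
  · rw [← pow_succ, ← map_pow, Ideal.Quotient.eq_zero_iff_mem]
    exact Ideal.subset_span (.inr rfl)
  · rw [sq, mul_assoc, mk_X_mul_mk_X_of_ne z hjz.symm, mul_zero]

theorem mk_X_mul_mk_X_sq (i j : σ) : π (X i) * π (X j) ^ 2 = 0 := by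
  rw [mul_comm, mk_X_sq_mul_mk_X]

theorem mk_X_sq_mul_mk_X_sq : π (X z) ^ 2 * π (X z) ^ 2 = 0 :=
  calc π (X z) ^ 2 * π (X z) ^ 2 = π (X z) ^ 2 * π (X z) * π (X z) := by ring
    _ = 0 := by rw [mk_X_sq_mul_mk_X, zero_mul]

variable [Fintype σ]

variable (R σ) in
def sumSqCoeff : MvPolynomial σ R →ₗ[R] R :=
  ∑ i, lcoeff R (Finsupp.single i 2)

theorem sumSqCoeff_apply (p : MvPolynomial σ R) :
    sumSqCoeff R σ p = ∑ i, coeff (Finsupp.single i 2) p := by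
  simp [sumSqCoeff]

theorem sumSqCoeff_mul_X_sq (r : MvPolynomial σ R) (i : σ) :
    sumSqCoeff R σ (r * X i ^ 2) = coeff 0 r := by
  classical
  rw [sumSqCoeff_apply, Finset.sum_eq_single i]
  · simp [X_pow_eq_monomial, coeff_mul_monomial']
  · intro l _ hli
    rw [X_pow_eq_monomial, coeff_mul_monomial', if_neg]
    simp [Finsupp.single_le_iff, hli.symm]
  · simp

theorem sumSqCoeff_mul_eq_zero_of_mem {p : MvPolynomial σ R} (hp : p ∈ fatPointIdeal R z)
    (r : MvPolynomial σ R) : sumSqCoeff R σ (r * p) = 0 := by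
  induction hp using Submodule.span_induction generalizing r with
  | mem p hp =>
    obtain (⟨i, j, hij, rfl⟩ | ⟨i, j, -, rfl⟩) | rfl := hp
    · simp [sumSqCoeff, coeff_single_two_mul_X_mul_X hij]
    · rw [mul_sub, map_sub, sumSqCoeff_mul_X_sq, sumSqCoeff_mul_X_sq, sub_self]
    · simp [sumSqCoeff, coeff_single_two_mul_X_pow_three]
  | zero => rw [mul_zero, map_zero]
  | add p p' _ _ hp hp' => rw [mul_add, map_add, hp, hp', add_zero]
  | smul a p _ hp => rw [smul_eq_mul, ← mul_assoc, hp]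

variable (R) in
def fatPointFunctional : (MvPolynomial σ R ⧸ fatPointIdeal R z) →ₗ[R] R :=
  ((fatPointIdeal R z).restrictScalars R).liftQ (sumSqCoeff R σ)
      (fun p hp => by simpa using sumSqCoeff_mul_eq_zero_of_mem z hp 1) ∘ₗ
    (Submodule.Quotient.restrictScalarsEquiv R (fatPointIdeal R z)).symm.toLinearMap

theorem fatPointFunctional_mk (p : MvPolynomial σ R) :
    fatPointFunctional R z (π p) = sumSqCoeff R σ p := rfl

theorem fatPointFunctional_one : fatPointFunctional R z 1 = 0 := by
  classical
  rw [← map_one π, fatPointFunctional_mk, sumSqCoeff_apply]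
  simp [coeff_one, eq_comm (a := (0 : σ →₀ ℕ))]

theorem fatPointFunctional_mk_X (i : σ) : fatPointFunctional R z (π (X i)) = 0 := by
  classical
  rw [fatPointFunctional_mk, sumSqCoeff_apply]
  simp only [coeff_X, Finsupp.single_eq_single_iff]
  simp

theorem fatPointFunctional_mk_X_sq : fatPointFunctional R z (π (X z) ^ 2) = 1 := by
  rw [← map_pow, fatPointFunctional_mk, ← one_mul (X z ^ 2), sumSqCoeff_mul_X_sq, coeff_zero_one]

end Polynomial

section Basis

variable {R : Type*} [CommRing R] {q : ℕ} (z : Fin q)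

local notation "π" => Ideal.Quotient.mk (fatPointIdeal R z)

variable (R) in
def fatPointBasisFamily : Fin (q + 2) → MvPolynomial (Fin q) R ⧸ fatPointIdeal R z :=
  Fin.cons 1 (Fin.snoc (fun i => π (X i)) (π (X z) ^ 2))

variable (R) in
def fatPointDualFamily : Fin (q + 2) → MvPolynomial (Fin q) R ⧸ fatPointIdeal R z :=
  Fin.cons (π (X z) ^ 2) (Fin.snoc (fun i => π (X i)) 1)

theorem fatPointFunctional_mul_eq_ite (m n : Fin (q + 2)) :
    fatPointFunctional R z (fatPointBasisFamily R z m * fatPointDualFamily R z n) =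
      if m = n then 1 else 0 := by
  classical
  refine Fin.cases ?_ (Fin.lastCases ?_ fun i => ?_) m <;>
    refine Fin.cases ?_ (Fin.lastCases ?_ fun j => ?_) n <;>
    simp [fatPointBasisFamily, fatPointDualFamily, mk_X_mul_mk_X, mk_X_sq_mul_mk_X,
      mk_X_mul_mk_X_sq, mk_X_sq_mul_mk_X_sq, fatPointFunctional_one, fatPointFunctional_mk_X,
      fatPointFunctional_mk_X_sq, apply_ite, Fin.ext_iff] <;>
    grind

theorem span_range_fatPointBasisFamily :
    ⊤ ≤ Submodule.span R (Set.range (fatPointBasisFamily R z)) := by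
  classical
  set S := Submodule.span R (Set.range (fatPointBasisFamily R z))
  have hmem (m : Fin (q + 2)) : fatPointBasisFamily R z m ∈ S := Submodule.subset_span ⟨m, rfl⟩
  have hmul (i : Fin q) : S.map (LinearMap.mulLeft R (π (X i))) ≤ S := by
    refine (Submodule.map_span_le _ _ _).mpr ?_
    rintro _ ⟨m, rfl⟩
    refine Fin.cases ?_ (Fin.lastCases ?_ fun j => ?_) m
    · simpa [fatPointBasisFamily] using hmem i.castSucc.succ
    · simp [fatPointBasisFamily, mk_X_mul_mk_X_sq]
    · simp only [fatPointBasisFamily, Fin.cons_succ, Fin.snoc_castSucc, LinearMap.mulLeft_apply,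
        mk_X_mul_mk_X]
      split_ifs
      · simpa [fatPointBasisFamily] using hmem (Fin.last q).succ
      · exact S.zero_mem
  rintro a -
  obtain ⟨p, rfl⟩ := Ideal.Quotient.mk_surjective a
  induction p using MvPolynomial.induction_on with
  | C r =>
    rw [← algebraMap_eq, Ideal.Quotient.mk_algebraMap, Algebra.algebraMap_eq_smul_one]
    exact S.smul_mem r (hmem 0)
  | add p p' hp hp' => exact map_add π p p' ▸ S.add_mem hp hp'
  | mul_X p i hp =>
    rw [map_mul, mul_comm]
    exact hmul i ⟨_, hp, rfl⟩

variable (R) in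
def fatPointBasis :
    Module.Basis (Fin (q + 2)) R (MvPolynomial (Fin q) R ⧸ fatPointIdeal R z) :=
  .mk (LinearIndependent.of_pairing_eq_ite
      ((LinearMap.mul R _).compr₂ (fatPointFunctional R z)) (fatPointFunctional_mul_eq_ite z))
    (span_range_fatPointBasisFamily z)

theorem fatPointBasis_apply (m : Fin (q + 2)) :
    fatPointBasis R z m = fatPointBasisFamily R z m :=
  Module.Basis.mk_apply ..

theorem fatPointBasis_zero : fatPointBasis R z 0 = 1 := by
  simp [fatPointBasis_apply, fatPointBasisFamily]

theorem fatPointBasis_succ_castSucc (i : Fin q) :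
    fatPointBasis R z i.castSucc.succ = π (X i) := by
  simp [fatPointBasis_apply, fatPointBasisFamily]

theorem fatPointBasis_last : fatPointBasis R z (Fin.last (q + 1)) = π (X z) ^ 2 := by
  simp [fatPointBasis_apply, fatPointBasisFamily, ← Fin.succ_last]

theorem coord_last_fatPointBasis :
    (fatPointBasis R z).coord (Fin.last (q + 1)) = fatPointFunctional R z := by
  refine (fatPointBasis R z).ext fun m => ?_
  have hlast : fatPointDualFamily R z (Fin.last (q + 1)) = 1 := by
    simp [fatPointDualFamily, ← Fin.succ_last]
  rw [Module.Basis.coord_apply, Module.Basis.repr_self, Finsupp.single_apply, fatPointBasis_apply,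
    ← mul_one (fatPointBasisFamily R z m), ← hlast, fatPointFunctional_mul_eq_ite]

theorem bijective_fatPointFunctional_comp_mul {k : Type*} [Field k] :
    Function.Bijective fun a : MvPolynomial (Fin q) k ⧸ fatPointIdeal k z =>
      fatPointFunctional k z ∘ₗ LinearMap.mul k _ a :=
  (fatPointBasis k z).bijective_of_pairing_eq_ite
    ((LinearMap.mul k _).compr₂ (fatPointFunctional k z))
    (fun m n => by simpa [fatPointBasis_apply] using fatPointFunctional_mul_eq_ite z m n)

end Basis

end

/-- For `q ≥ 1` and a field `k`, the G-fat point algebra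
`A_q = k[y₁,…,y_q]/((yᵢyⱼ : i ≠ j) + (yᵢ² − yⱼ² : i ≠ j) + (y₁³))` is free of rank
`q + 2` over `k` with basis `1, y₁, …, y_q, y₁²`, and for the functional `φ₀` dual to
`y₁²` in this basis, the symmetric bilinear form `B_{φ₀}(a, b) = φ₀ (a b)` is
non-degenerate. -/
theorem gFatPoint_oriented_gorenstein
    (k : Type*) [Field k] (q : ℕ) (hq : 0 < q)
    (I : Ideal (MvPolynomial (Fin q) k))
    (hI : I = Ideal.span
      ({p | ∃ i j : Fin q, i ≠ j ∧ p = X i * X j} ∪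
       {p | ∃ i j : Fin q, i ≠ j ∧ p = X i ^ 2 - X j ^ 2} ∪
       {X (⟨0, hq⟩ : Fin q) ^ 3})) :
    ∃ b : Module.Basis (Fin (q + 2)) k (MvPolynomial (Fin q) k ⧸ I),
      b ⟨0, by omega⟩ = 1 ∧
      (∀ i : Fin q, b ⟨i.1 + 1, by omega⟩ = Ideal.Quotient.mk I (X i)) ∧
      b ⟨q + 1, by omega⟩ = Ideal.Quotient.mk I (X (⟨0, hq⟩ : Fin q)) ^ 2 ∧
      Function.Bijective
        (fun a : MvPolynomial (Fin q) k ⧸ I =>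
          (b.coord ⟨q + 1, by omega⟩) ∘ₗ
            LinearMap.mul k (MvPolynomial (Fin q) k ⧸ I) a) := by
  obtain rfl : I = fatPointIdeal k ⟨0, hq⟩ := hI
  refine ⟨fatPointBasis k ⟨0, hq⟩, fatPointBasis_zero _, fatPointBasis_succ_castSucc _,
    fatPointBasis_last _, ?_⟩
  exact coord_last_fatPointBasis (R := k) ⟨0, hq⟩ ▸ bijective_fatPointFunctional_comp_mul _
end
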